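/- Assume γ₁₂₃₄ = 0, γ₁₂₃₅ ≠ 0 and γ₁₃₅₇ ≠ 0. Then h̃₃ − (2γ₁₃₅₇/γ₁₂₃₅) y^{p³+2} x^{p³−2} lies in the ideal of K[x,y,z] generated by x^{p³−1}. (Equivalently, the leading term of h̃₃ with respect to the graded reverse lexicographic order with x < y < z is (2γ₁₃₅₇/γ₁₂₃₅) y^{p³+2} x^{p³−2}.) -/
import Mathlib


noncomputable section

open MvPolynomial

variable (p : ℕ) (K : Type*) [Field K]

/-- The 10×4 matrix Γ(M) whose rows are the Frobenius twists of the rows of M. -/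
def Gam (M : Matrix (Fin 2) (Fin 4) K) : Matrix (Fin 10) (Fin 4) K :=
  fun i j => M ⟨i.val % 2, by omega⟩ j ^ p ^ (i.val / 2)

/-- γ_{abcd}(M): the determinant of the 4×4 matrix whose rows are rows
a, b, c, d (0-indexed) of Γ(M). -/
def gam (M : Matrix (Fin 2) (Fin 4) K) (a b c d : Fin 10) : K :=
  (Matrix.of ![Gam p K M a, Gam p K M b, Gam p K M c, Gam p K M d]).det

/-- δ = y² − xz. -/
def del : MvPolynomial (Fin 3) K := X 1 ^ 2 - X 0 * X 2

/-- The action of the element (n₁,…,n₄) ∈ E = (ℤ/pℤ)⁴ on K[x,y,z]: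
x ↦ x, y ↦ y + a·x, z ↦ z + 2a·y + (a²+b)·x where a = Σ nⱼ c₁ⱼ and b = Σ nⱼ c₂ⱼ. -/
def act [CharP K p] (M : Matrix (Fin 2) (Fin 4) K) (n : Fin 4 → ZMod p) :
    MvPolynomial (Fin 3) K →ₐ[K] MvPolynomial (Fin 3) K :=
  aeval ![X 0,
    X 1 + C (∑ j, (ZMod.castHom (dvd_refl p) K) (n j) * M 0 j) * X 0,
    X 2 + C (2 * ∑ j, (ZMod.castHom (dvd_refl p) K) (n j) * M 0 j) * X 1
        + C ((∑ j, (ZMod.castHom (dvd_refl p) K) (n j) * M 0 j) ^ 2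
             + ∑ j, (ZMod.castHom (dvd_refl p) K) (n j) * M 1 j) * X 0]

/-- The invariant ring K[x,y,z]^E, as a set of polynomials. -/
def invariants [CharP K p] (M : Matrix (Fin 2) (Fin 4) K) : Set (MvPolynomial (Fin 3) K) :=
  {f | ∀ n : Fin 4 → ZMod p, act p K M n f = f}

/-- N_M(f): the product of the distinct elements of the E-orbit of f. -/
def NM [CharP K p] [NeZero p] (M : Matrix (Fin 2) (Fin 4) K) (f : MvPolynomial (Fin 3) K) :
    MvPolynomial (Fin 3) K :=
  letI : DecidableEq (MvPolynomial (Fin 3) K) := Classical.decEq _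
  (Finset.image (fun n : Fin 4 → ZMod p => act p K M n f) Finset.univ).prod id

/-- h₁ = δ^p + (γ₁₂₄₅/γ₁₂₃₅) y^p x^p + (γ₁₃₄₅/γ₁₂₃₅) δ x^{2p−2} + (γ₂₃₄₅/γ₁₂₃₅) y x^{2p−1}. -/
def h1 (M : Matrix (Fin 2) (Fin 4) K) : MvPolynomial (Fin 3) K :=
  del K ^ p
  + C (gam p K M 0 1 3 4 / gam p K M 0 1 2 4) * X 1 ^ p * X 0 ^ p
  + C (gam p K M 0 2 3 4 / gam p K M 0 1 2 4) * del K * X 0 ^ (2 * p - 2)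
  + C (gam p K M 1 2 3 4 / gam p K M 0 1 2 4) * X 1 * X 0 ^ (2 * p - 1)

/-- h₂ = y^{p³} − (γ₁₂₃₇/γ₁₂₃₅) y^{p²} x^{p³−p²} + (γ₁₂₅₇/γ₁₂₃₅) y^p x^{p³−p}
       + (γ₁₃₅₇/γ₁₂₃₅) δ x^{p³−2} + (γ₂₃₅₇/γ₁₂₃₅) y x^{p³−1}. -/
def h2 (M : Matrix (Fin 2) (Fin 4) K) : MvPolynomial (Fin 3) K :=
  X 1 ^ p ^ 3
  - C (gam p K M 0 1 2 6 / gam p K M 0 1 2 4) * X 1 ^ p ^ 2 * X 0 ^ (p ^ 3 - p ^ 2)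
  + C (gam p K M 0 1 4 6 / gam p K M 0 1 2 4) * X 1 ^ p * X 0 ^ (p ^ 3 - p)
  + C (gam p K M 0 2 4 6 / gam p K M 0 1 2 4) * del K * X 0 ^ (p ^ 3 - 2)
  + C (gam p K M 1 2 4 6 / gam p K M 0 1 2 4) * X 1 * X 0 ^ (p ^ 3 - 1)

/-- h̃₃ = h₂² − h₁^{p²} + 2(γ₁₂₃₇/γ₁₂₃₅) h₁^{p(p+1)/2} x^{p³−p²}
        − 2(γ₁₂₅₇/γ₁₂₃₅) h₁^{(p²+1)/2} x^{p³−p}. -/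
def h3t (M : Matrix (Fin 2) (Fin 4) K) : MvPolynomial (Fin 3) K :=
  h2 p K M ^ 2 - h1 p K M ^ p ^ 2
  + C (2 * gam p K M 0 1 2 6 / gam p K M 0 1 2 4)
      * h1 p K M ^ (p * (p + 1) / 2) * X 0 ^ (p ^ 3 - p ^ 2)
  - C (2 * gam p K M 0 1 4 6 / gam p K M 0 1 2 4)
      * h1 p K M ^ ((p ^ 2 + 1) / 2) * X 0 ^ (p ^ 3 - p)

private lemma pow_add_eq' {R : Type*} [CommRing R] (a b : R) (n : ℕ) :
    ∃ s, (a + b) ^ n = a ^ n + b * s := by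
  induction n with
  | zero => exact ⟨0, by ring⟩
  | succ n ih =>
    obtain ⟨s, hs⟩ := ih
    exact ⟨s * (a + b) + a ^ n, by rw [pow_succ, hs]; ring⟩

private lemma key1 {R : Type*} [CommRing R] (x y z A B Cc D : R) (p q2 q3 β γ d : ℕ)
    (e1 : q3 - q2 = d + β + γ + 1) (e2 : q3 - p = d + β + β + γ + 1)
    (e3 : q3 - 2 = d + β + β + γ + γ + 1) (e4 : q3 - 1 = d + β + β + γ + γ + 2) :
    ∃ r, (y ^ q3 - A * y ^ q2 * x ^ (q3 - q2) + B * y ^ p * x ^ (q3 - p)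
            + Cc * (y ^ 2 - x * z) * x ^ (q3 - 2) + D * y * x ^ (q3 - 1)) ^ 2
      - (y ^ q3 * y ^ q3 - 2 * A * (y ^ q3 * y ^ q2) * x ^ (q3 - q2)
          + 2 * B * (y ^ q3 * y ^ p) * x ^ (q3 - p)
          + 2 * Cc * (y ^ q3 * y ^ 2) * x ^ (q3 - 2))
      = x ^ (q3 - 1) * r := by
  refine ⟨-(2 * Cc * y ^ q3 * z) + 2 * D * y ^ q3 * y
      + x ^ d * (-(A * y ^ q2) + B * y ^ p * x ^ β + Cc * (y ^ 2 - x * z) * x ^ (β + γ)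
          + D * y * x ^ (β + γ + 1)) ^ 2, ?_⟩
  rw [e1, e2, e3, e4]
  ring

private lemma key2 {R : Type*} [CommRing R] (p : ℕ) [Fact p.Prime] [CharP R p]
    (x y z E F G : R)
    (hk2 : p ^ 3 = (p ^ 3 - 1) + 1)
    (hk3 : (2 * p - 2) * p ^ 2 = (p ^ 3 - 1) + (p ^ 3 + 1 - 2 * p ^ 2))
    (hk4 : (2 * p - 1) * p ^ 2 = (p ^ 3 - 1) + (p ^ 3 + 1 - p ^ 2))
    (hk5 : p * p ^ 2 = (p ^ 3 - 1) + 1) :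
    ∃ r, ((y ^ 2 - x * z) ^ p + E * y ^ p * x ^ p + F * (y ^ 2 - x * z) * x ^ (2 * p - 2)
            + G * y * x ^ (2 * p - 1)) ^ p ^ 2
      - y ^ p ^ 3 * y ^ p ^ 3 = x ^ (p ^ 3 - 1) * r := by
  have w1 : (x ^ p) ^ p ^ 2 = x ^ (p ^ 3 - 1) * x := by
    rw [← pow_mul, hk5, pow_add, pow_one]
  have w2 : (x ^ (2 * p - 2)) ^ p ^ 2 = x ^ (p ^ 3 - 1) * x ^ (p ^ 3 + 1 - 2 * p ^ 2) := by
    rw [← pow_mul, hk3, pow_add]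
  have w3 : (x ^ (2 * p - 1)) ^ p ^ 2 = x ^ (p ^ 3 - 1) * x ^ (p ^ 3 + 1 - p ^ 2) := by
    rw [← pow_mul, hk4, pow_add]
  have w4 : x ^ p ^ 3 = x ^ (p ^ 3 - 1) * x := by
    conv_lhs => rw [hk2]
    rw [pow_add, pow_one]
  have t0 : ((y ^ 2 - x * z) ^ p) ^ p ^ 2 = y ^ p ^ 3 * y ^ p ^ 3
      - x ^ (p ^ 3 - 1) * (x * z ^ p ^ 3) := by
    rw [← pow_mul, show p * p ^ 2 = p ^ 3 from by ring, sub_pow_char_pow, mul_pow, w4,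
      ← pow_mul, show 2 * p ^ 3 = p ^ 3 + p ^ 3 from by ring, pow_add]
    ring
  refine ⟨-(x * z ^ p ^ 3) + E ^ p ^ 2 * (y ^ p) ^ p ^ 2 * x
      + F ^ p ^ 2 * (y ^ 2 - x * z) ^ p ^ 2 * x ^ (p ^ 3 + 1 - 2 * p ^ 2)
      + G ^ p ^ 2 * y ^ p ^ 2 * x ^ (p ^ 3 + 1 - p ^ 2), ?_⟩
  rw [add_pow_char_pow, add_pow_char_pow, add_pow_char_pow, t0, mul_pow, mul_pow, w1,
    mul_pow, mul_pow, w2, mul_pow, mul_pow, w3]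
  ring

private lemma key3 {R : Type*} [CommRing R] (p : ℕ) [Fact p.Prime] [CharP R p]
    (x y z E F G : R)
    (hm : p * (p + 1) / 2 = ((p + 1) / 2) * p)
    (hm2 : 2 * (p ^ 2 * ((p + 1) / 2)) = p ^ 3 + p ^ 2)
    (h2p : 2 * p - 2 = p + (p - 2)) (h2p1 : 2 * p - 1 = p + (p - 1))
    (hq : p ^ 2 + (p ^ 3 - p ^ 2) = (p ^ 3 - 1) + 1) :
    ∃ r, ((y ^ 2 - x * z) ^ p + E * y ^ p * x ^ p + F * (y ^ 2 - x * z) * x ^ (2 * p - 2)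
            + G * y * x ^ (2 * p - 1)) ^ (p * (p + 1) / 2) * x ^ (p ^ 3 - p ^ 2)
      - y ^ p ^ 3 * y ^ p ^ 2 * x ^ (p ^ 3 - p ^ 2) = x ^ (p ^ 3 - 1) * r := by
  set δ : R := y ^ 2 - x * z with hδ
  set U : R := E * y ^ p + F * δ * x ^ (p - 2) + G * y * x ^ (p - 1) with hU
  have hsplit : δ ^ p + E * y ^ p * x ^ p + F * δ * x ^ (2 * p - 2) + G * y * x ^ (2 * p - 1)
      = δ ^ p + x ^ p * U := by
    rw [h2p, h2p1, pow_add, pow_add, hU]; ring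
  obtain ⟨s1, hs1⟩ := pow_add_eq' (δ ^ p) (x ^ p * U) ((p + 1) / 2)
  obtain ⟨s2, hs2⟩ := pow_add_eq' ((y ^ 2) ^ p ^ 2) (-((x * z) ^ p ^ 2)) ((p + 1) / 2)
  have hδ2 : ((δ ^ p) ^ ((p + 1) / 2)) ^ p = (δ ^ p ^ 2) ^ ((p + 1) / 2) := by
    conv_lhs => rw [← pow_mul, ← pow_mul]
    conv_rhs => rw [← pow_mul]
    congr 1
    ring
  have hδ3 : δ ^ p ^ 2 = (y ^ 2) ^ p ^ 2 - (x * z) ^ p ^ 2 := by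
    rw [hδ, sub_pow_char_pow]
  have c5 : ((y ^ 2) ^ p ^ 2) ^ ((p + 1) / 2) = y ^ p ^ 3 * y ^ p ^ 2 := by
    rw [← pow_mul, ← pow_mul, hm2, pow_add]
  have hbig : (δ ^ p + E * y ^ p * x ^ p + F * δ * x ^ (2 * p - 2)
        + G * y * x ^ (2 * p - 1)) ^ (p * (p + 1) / 2)
      = y ^ p ^ 3 * y ^ p ^ 2 + x ^ p ^ 2 * (-(z ^ p ^ 2 * s2) + U ^ p * s1 ^ p) := by
    have hxp : (x ^ p * U * s1) ^ p = x ^ p ^ 2 * (U ^ p * s1 ^ p) := by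
      rw [mul_pow, mul_pow, ← pow_mul, show p * p = p ^ 2 from by ring]
      ring
    rw [hsplit, hm, pow_mul, hs1, add_pow_char, hxp, hδ2, hδ3, sub_eq_add_neg, hs2, c5]
    ring
  have wq : (x ^ p ^ 2) * x ^ (p ^ 3 - p ^ 2) = x ^ (p ^ 3 - 1) * x := by
    rw [← pow_add, hq, pow_add, pow_one]
  refine ⟨x * (-(z ^ p ^ 2 * s2) + U ^ p * s1 ^ p), ?_⟩
  rw [hbig]
  linear_combination (-(z ^ p ^ 2 * s2) + U ^ p * s1 ^ p) * wq

private lemma key4 {R : Type*} [CommRing R] (p : ℕ) [Fact p.Prime] [CharP R p]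
    (x y z E F G : R)
    (hn2 : 2 * (p * ((p ^ 2 + 1) / 2)) = p ^ 3 + p)
    (h2p : 2 * p - 2 = p + (p - 2)) (h2p1 : 2 * p - 1 = p + (p - 1))
    (hq : p + (p ^ 3 - p) = (p ^ 3 - 1) + 1) :
    ∃ r, ((y ^ 2 - x * z) ^ p + E * y ^ p * x ^ p + F * (y ^ 2 - x * z) * x ^ (2 * p - 2)
            + G * y * x ^ (2 * p - 1)) ^ ((p ^ 2 + 1) / 2) * x ^ (p ^ 3 - p)
      - y ^ p ^ 3 * y ^ p * x ^ (p ^ 3 - p) = x ^ (p ^ 3 - 1) * r := by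
  set δ : R := y ^ 2 - x * z with hδ
  set U : R := E * y ^ p + F * δ * x ^ (p - 2) + G * y * x ^ (p - 1) with hU
  have hsplit : δ ^ p + E * y ^ p * x ^ p + F * δ * x ^ (2 * p - 2) + G * y * x ^ (2 * p - 1)
      = δ ^ p + x ^ p * U := by
    rw [h2p, h2p1, pow_add, pow_add, hU]; ring
  obtain ⟨s3, hs3⟩ := pow_add_eq' (δ ^ p) (x ^ p * U) ((p ^ 2 + 1) / 2)
  obtain ⟨s4, hs4⟩ := pow_add_eq' ((y ^ 2) ^ p) (-((x * z) ^ p)) ((p ^ 2 + 1) / 2)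
  have hδ3 : δ ^ p = (y ^ 2) ^ p - (x * z) ^ p := by rw [hδ, sub_pow_char]
  have c5 : ((y ^ 2) ^ p) ^ ((p ^ 2 + 1) / 2) = y ^ p ^ 3 * y ^ p := by
    rw [← pow_mul, ← pow_mul, hn2, pow_add]
  have hbig : (δ ^ p + E * y ^ p * x ^ p + F * δ * x ^ (2 * p - 2)
        + G * y * x ^ (2 * p - 1)) ^ ((p ^ 2 + 1) / 2)
      = y ^ p ^ 3 * y ^ p + x ^ p * (-(z ^ p * s4) + U * s3) := by
    rw [hsplit, hs3, hδ3, sub_eq_add_neg, hs4, c5]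
    ring
  have wq : (x ^ p) * x ^ (p ^ 3 - p) = x ^ (p ^ 3 - 1) * x := by
    rw [← pow_add, hq, pow_add, pow_one]
  refine ⟨x * (-(z ^ p * s4) + U * s3), ?_⟩
  rw [hbig]
  linear_combination (-(z ^ p * s4) + U * s3) * wq

/-- Lemma 4.2: if γ₁₂₃₄ = 0, γ₁₂₃₅ ≠ 0 and γ₁₃₅₇ ≠ 0, then the difference between h̃₃
and (2γ₁₃₅₇/γ₁₂₃₅) y^{p³+2} x^{p³−2} lies in the ideal generated by x^{p³−1}.
(Equivalently, LT(h̃₃) = (2γ₁₃₅₇/γ₁₂₃₅) y^{p³+2} x^{p³−2} in grevlex with x < y < z.) -/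
theorem lt_h3tilde [Fact p.Prime] (hodd : Odd p) [CharP K p]
    (M : Matrix (Fin 2) (Fin 4) K)
    (h1234 : gam p K M 0 1 2 3 = 0) (h1235 : gam p K M 0 1 2 4 ≠ 0)
    (h1357 : gam p K M 0 2 4 6 ≠ 0) :
    h3t p K M
      - C (2 * gam p K M 0 2 4 6 / gam p K M 0 1 2 4)
          * X 1 ^ (p ^ 3 + 2) * X 0 ^ (p ^ 3 - 2)
      ∈ Ideal.span {(X 0 : MvPolynomial (Fin 3) K) ^ (p ^ 3 - 1)} := by
  have hp : p.Prime := Fact.out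
  have hp2 : 2 ≤ p := hp.two_le
  obtain ⟨k, hk⟩ := hodd
  -- arithmetic facts
  have hpp2 : p ≤ p ^ 2 := Nat.le_self_pow two_ne_zero p
  have hp23 : p ^ 2 ≤ p ^ 3 := Nat.pow_le_pow_right (by omega) (by omega)
  have hpp3 : p ≤ p ^ 3 := le_trans hpp2 hp23
  have h1q3 : 1 ≤ p ^ 3 := by omega
  have h2q3 : 2 ≤ p ^ 3 := by omega
  have h2p2 : 2 * p ^ 2 ≤ p ^ 3 + 1 := by
    have h := Nat.mul_le_mul_right (p ^ 2) hp2
    have h' : p * p ^ 2 = p ^ 3 := by ring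
    linarith
  have hp2q : p ^ 2 ≤ p ^ 3 + 1 := by omega
  have hR1 : p ^ 3 - p ^ 2 = (p ^ 3 + 1 - 2 * p ^ 2) + (p ^ 2 - p) + (p - 2) + 1 := by
    zify [hp23, h2p2, hpp2, hp2]; ring
  have hR2 : p ^ 3 - p = (p ^ 3 + 1 - 2 * p ^ 2) + (p ^ 2 - p) + (p ^ 2 - p) + (p - 2) + 1 := by
    zify [hpp3, h2p2, hpp2, hp2]; ring
  have hR3 : p ^ 3 - 2 = (p ^ 3 + 1 - 2 * p ^ 2) + (p ^ 2 - p) + (p ^ 2 - p)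
      + (p - 2) + (p - 2) + 1 := by
    zify [h2q3, h2p2, hpp2, hp2]; ring
  have hR4 : p ^ 3 - 1 = (p ^ 3 + 1 - 2 * p ^ 2) + (p ^ 2 - p) + (p ^ 2 - p)
      + (p - 2) + (p - 2) + 2 := by
    zify [h1q3, h2p2, hpp2, hp2]; ring
  have hk2 : p ^ 3 = (p ^ 3 - 1) + 1 := (Nat.sub_add_cancel h1q3).symm
  have hk3 : (2 * p - 2) * p ^ 2 = (p ^ 3 - 1) + (p ^ 3 + 1 - 2 * p ^ 2) := by
    zify [show 2 ≤ 2 * p by omega, h1q3, h2p2]; ring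
  have hk4 : (2 * p - 1) * p ^ 2 = (p ^ 3 - 1) + (p ^ 3 + 1 - p ^ 2) := by
    zify [show 1 ≤ 2 * p by omega, h1q3, hp2q]; ring
  have hk5 : p * p ^ 2 = (p ^ 3 - 1) + 1 := by zify [h1q3]; ring
  have hm : p * (p + 1) / 2 = ((p + 1) / 2) * p := by
    rw [Nat.mul_div_assoc p ⟨k + 1, by omega⟩]; ring
  have hm2 : 2 * (p ^ 2 * ((p + 1) / 2)) = p ^ 3 + p ^ 2 := by
    rw [show 2 * (p ^ 2 * ((p + 1) / 2)) = p ^ 2 * (2 * ((p + 1) / 2)) from by ring,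
      show 2 * ((p + 1) / 2) = p + 1 from by omega]
    ring
  have hsq : p ^ 2 = 2 * (2 * k ^ 2 + 2 * k) + 1 := by rw [hk]; ring
  have h22 : 2 * ((p ^ 2 + 1) / 2) = p ^ 2 + 1 := by
    have h : ∀ a : ℕ, a = 2 * (2 * k ^ 2 + 2 * k) + 1 → 2 * ((a + 1) / 2) = a + 1 := by
      intro a ha; omega
    exact h _ hsq
  have hn2 : 2 * (p * ((p ^ 2 + 1) / 2)) = p ^ 3 + p := by
    rw [show 2 * (p * ((p ^ 2 + 1) / 2)) = p * (2 * ((p ^ 2 + 1) / 2)) from by ring, h22]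
    ring
  have h2p : 2 * p - 2 = p + (p - 2) := by omega
  have h2p1 : 2 * p - 1 = p + (p - 1) := by omega
  have hq3 : p ^ 2 + (p ^ 3 - p ^ 2) = (p ^ 3 - 1) + 1 := by zify [hp23, h1q3]; ring
  have hq4 : p + (p ^ 3 - p) = (p ^ 3 - 1) + 1 := by zify [hpp3, h1q3]; ring
  -- shapes
  have hh2 : h2 p K M
      = X 1 ^ p ^ 3
        - C (gam p K M 0 1 2 6 / gam p K M 0 1 2 4) * X 1 ^ p ^ 2 * X 0 ^ (p ^ 3 - p ^ 2)
        + C (gam p K M 0 1 4 6 / gam p K M 0 1 2 4) * X 1 ^ p * X 0 ^ (p ^ 3 - p)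
        + C (gam p K M 0 2 4 6 / gam p K M 0 1 2 4) * (X 1 ^ 2 - X 0 * X 2) * X 0 ^ (p ^ 3 - 2)
        + C (gam p K M 1 2 4 6 / gam p K M 0 1 2 4) * X 1 * X 0 ^ (p ^ 3 - 1) := by
    simp only [h2, del]
  have hh1 : h1 p K M
      = ((X 1 : MvPolynomial (Fin 3) K) ^ 2 - X 0 * X 2) ^ p
        + C (gam p K M 0 1 3 4 / gam p K M 0 1 2 4) * X 1 ^ p * X 0 ^ p
        + C (gam p K M 0 2 3 4 / gam p K M 0 1 2 4) * (X 1 ^ 2 - X 0 * X 2) * X 0 ^ (2 * p - 2)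
        + C (gam p K M 1 2 3 4 / gam p K M 0 1 2 4) * X 1 * X 0 ^ (2 * p - 1) := by
    simp only [h1, del]
  obtain ⟨r1, he1⟩ := key1 (X 0 : MvPolynomial (Fin 3) K) (X 1) (X 2)
    (C (gam p K M 0 1 2 6 / gam p K M 0 1 2 4)) (C (gam p K M 0 1 4 6 / gam p K M 0 1 2 4))
    (C (gam p K M 0 2 4 6 / gam p K M 0 1 2 4)) (C (gam p K M 1 2 4 6 / gam p K M 0 1 2 4))
    p (p ^ 2) (p ^ 3) (p ^ 2 - p) (p - 2) (p ^ 3 + 1 - 2 * p ^ 2) hR1 hR2 hR3 hR4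
  rw [← hh2] at he1
  obtain ⟨r2, he2⟩ := key2 p (X 0 : MvPolynomial (Fin 3) K) (X 1) (X 2)
    (C (gam p K M 0 1 3 4 / gam p K M 0 1 2 4)) (C (gam p K M 0 2 3 4 / gam p K M 0 1 2 4))
    (C (gam p K M 1 2 3 4 / gam p K M 0 1 2 4)) hk2 hk3 hk4 hk5
  rw [← hh1] at he2
  obtain ⟨r3, he3⟩ := key3 p (X 0 : MvPolynomial (Fin 3) K) (X 1) (X 2)
    (C (gam p K M 0 1 3 4 / gam p K M 0 1 2 4)) (C (gam p K M 0 2 3 4 / gam p K M 0 1 2 4))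
    (C (gam p K M 1 2 3 4 / gam p K M 0 1 2 4)) hm hm2 h2p h2p1 hq3
  rw [← hh1] at he3
  obtain ⟨r4, he4⟩ := key4 p (X 0 : MvPolynomial (Fin 3) K) (X 1) (X 2)
    (C (gam p K M 0 1 3 4 / gam p K M 0 1 2 4)) (C (gam p K M 0 2 3 4 / gam p K M 0 1 2 4))
    (C (gam p K M 1 2 3 4 / gam p K M 0 1 2 4)) hn2 h2p h2p1 hq4
  rw [← hh1] at he4
  -- coefficient rewrites
  have hc1 : (C (2 * gam p K M 0 1 2 6 / gam p K M 0 1 2 4) : MvPolynomial (Fin 3) K)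
      = 2 * C (gam p K M 0 1 2 6 / gam p K M 0 1 2 4) := by
    rw [mul_div_assoc, map_mul, map_ofNat]
  have hc2 : (C (2 * gam p K M 0 1 4 6 / gam p K M 0 1 2 4) : MvPolynomial (Fin 3) K)
      = 2 * C (gam p K M 0 1 4 6 / gam p K M 0 1 2 4) := by
    rw [mul_div_assoc, map_mul, map_ofNat]
  have hc3 : (C (2 * gam p K M 0 2 4 6 / gam p K M 0 1 2 4) : MvPolynomial (Fin 3) K)
      = 2 * C (gam p K M 0 2 4 6 / gam p K M 0 1 2 4) := by
    rw [mul_div_assoc, map_mul, map_ofNat]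
  rw [Ideal.mem_span_singleton]
  refine ⟨r1 - r2 + 2 * C (gam p K M 0 1 2 6 / gam p K M 0 1 2 4) * r3
      - 2 * C (gam p K M 0 1 4 6 / gam p K M 0 1 2 4) * r4, ?_⟩
  simp only [h3t]
  rw [hc1, hc2, hc3]
  linear_combination he1 - he2 + (2 * C (gam p K M 0 1 2 6 / gam p K M 0 1 2 4)) * he3
    - (2 * C (gam p K M 0 1 4 6 / gam p K M 0 1 2 4)) * he4
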